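/- (Parametrization of the steady states.) For every choice of positive rate constants k ∈ ℝ¹⁰, the set of positive steady states {x ∈ ℝ⁹ : xᵢ > 0 for all i, and g_k(x) = 0} equals the image of the parametrization map χ_k : ℝ³_{>0} → ℝ⁹_{>0}, and χ_k is injective. -/

import Mathlib

open Matrix Polynomial

noncomputable section

/-- The mass-action vector field of the mixed-mechanism dual-site phosphorylation
network.  Indexing: `k i` is the rate constant `k_{i+1}`, and `x i` is the
concentration `x_{i+1}`. -/
def g (k : Fin 10 → ℝ) (x : Fin 9 → ℝ) : Fin 9 → ℝ :=
  ![-k 0 * x 0 * x 1 + k 1 * x 2 + k 9 * x 8,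
    -k 0 * x 0 * x 1 + k 1 * x 2 + k 3 * x 3,
    k 0 * x 0 * x 1 - (k 1 + k 2) * x 2,
    k 2 * x 2 - k 3 * x 3,
    k 3 * x 3 - k 4 * x 4 * x 5 + k 5 * x 6,
    -k 4 * x 4 * x 5 - k 7 * x 5 * x 7 + (k 5 + k 6) * x 6 + (k 8 + k 9) * x 8,
    k 4 * x 4 * x 5 - (k 5 + k 6) * x 6,
    k 6 * x 6 - k 7 * x 5 * x 7 + k 8 * x 8,
    k 7 * x 5 * x 7 - (k 8 + k 9) * x 8]

/-- The conservation map `φ(x) = (K_tot, P_tot, S_tot)`. -/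
def phi (x : Fin 9 → ℝ) : Fin 3 → ℝ :=
  ![x 1 + x 2 + x 3,
    x 5 + x 6 + x 8,
    x 0 + x 2 + x 3 + x 4 + x 6 + x 7 + x 8]

/-- The steady-state parametrization `χ_k(x₁, x₂, x₆)`; the input is
`y = (x₁, x₂, x₆)`. -/
def chi (k : Fin 10 → ℝ) (y : Fin 3 → ℝ) : Fin 9 → ℝ :=
  ![y 0, y 1,
    k 0 * y 0 * y 1 / (k 1 + k 2),
    k 0 * k 2 * y 0 * y 1 / ((k 1 + k 2) * k 3),
    k 0 * k 2 * (k 5 + k 6) * y 0 * y 1 / ((k 1 + k 2) * k 4 * k 6 * y 2),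
    y 2,
    k 0 * k 2 * y 0 * y 1 / ((k 1 + k 2) * k 6),
    k 0 * k 2 * (k 8 + k 9) * y 0 * y 1 / ((k 1 + k 2) * k 7 * k 9 * y 2),
    k 0 * k 2 * y 0 * y 1 / ((k 1 + k 2) * k 9)]

/-- The 9×9 Jacobian matrix of `g k` at `x`: the matrix of partial
derivatives `∂gᵢ/∂xⱼ`. -/
def Jmat (k : Fin 10 → ℝ) (x : Fin 9 → ℝ) : Matrix (Fin 9) (Fin 9) ℝ :=
  Matrix.of fun i j => fderiv ℝ (fun y => g k y i) x (Pi.single j 1)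

/-- Hurwitz-matrix entries from the coefficients `b₁, …, b₆` (given as
`b 1, …, b 6`), with the conventions `b₀ = 1` and `b_m = 0` for `m < 0` or
`m > 6`. -/
def hcoef (b : ℕ → ℝ) : ℤ → ℝ := fun m =>
  if m = 0 then 1 else if 1 ≤ m ∧ m ≤ 6 then b m.toNat else 0

/-- The `i`-th Hurwitz determinant: the determinant of the `i × i` matrix whose
(1-indexed) `(j, l)` entry is `b_{2j − l}`. -/
def hurwitzDet (b : ℕ → ℝ) (i : ℕ) : ℝ :=
  (Matrix.of fun j l : Fin i => hcoef b (2 * ((j : ℤ) + 1) - ((l : ℤ) + 1))).det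

/-- The coefficients `b₁, …, b₆` of the degree-6 factor of the characteristic
polynomial of the Jacobian at the parametrized steady state `χ_k(y)`:
since `charpoly = λ³(λ⁶ + b₁λ⁵ + ⋯ + b₆)`, the coefficient `bᵢ` is the
coefficient of `λ^(9−i)` in the characteristic polynomial. -/
def bcoef (k : Fin 10 → ℝ) (y : Fin 3 → ℝ) : ℕ → ℝ := fun i =>
  ((Jmat k (chi k y)).charpoly).coeff (9 - i)

/-!
At a steady state the equations `g₃ = 0`, `g₄ = 0`, `g₄ + g₅ + g₇ = 0` and
`g₄ + g₅ + g₇ + g₈ + g₉ = 0` say that every catalytic step carries the same flux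
`k₃x₃ = k₄x₄ = k₇x₇ = k₁₀x₉ = k₁k₃x₁x₂/(k₂+k₃)`, and then `g₇ = 0`, `g₉ = 0` give `x₅` and `x₈`
in terms of `x₆`. So a positive steady state is `χ_k` of its own coordinates `(x₁, x₂, x₆)`;
conversely `g_k ∘ χ_k = 0` is a rational identity. Since `χ_k` keeps `x₁, x₂, x₆` as
coordinates, it is injective.
-/

def freeCoords (x : Fin 9 → ℝ) : Fin 3 → ℝ := ![x 0, x 1, x 5]

theorem freeCoords_chi (k : Fin 10 → ℝ) : Function.LeftInverse freeCoords (chi k) := by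
  intro y
  ext i
  fin_cases i <;> rfl

theorem chi_injective (k : Fin 10 → ℝ) : Function.Injective (chi k) :=
  (freeCoords_chi k).injective

section

variable {k : Fin 10 → ℝ}

theorem chi_pos (hk : ∀ i, 0 < k i) {y : Fin 3 → ℝ} (hy : ∀ i, 0 < y i) (i : Fin 9) :
    0 < chi k y i := by
  have := hk 0; have := hk 1; have := hk 2; have := hk 3; have := hk 4
  have := hk 5; have := hk 6; have := hk 7; have := hk 8; have := hk 9
  have := hy 0; have := hy 1; have := hy 2
  fin_cases i <;>
    simp only [chi, Fin.isValue, Fin.zero_eta, Fin.mk_one, Fin.reduceFinMk, cons_val_zero,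
      cons_val_one, cons_val] <;>
    positivity

theorem g_chi_eq_zero (hk : ∀ i, 0 < k i) {y : Fin 3 → ℝ} (hy : y 2 ≠ 0) :
    g k (chi k y) = 0 := by
  have := (hk 3).ne'; have := (hk 4).ne'; have := (hk 6).ne'; have := (hk 7).ne'
  have := (hk 9).ne'
  have : k 1 + k 2 ≠ 0 := (add_pos (hk 1) (hk 2)).ne'
  ext i
  fin_cases i <;>
    simp only [g, chi, Fin.isValue, Fin.zero_eta, Fin.mk_one, Fin.reduceFinMk, cons_val_zero,
      cons_val_one, cons_val, Pi.zero_apply] <;>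
    field_simp <;>
    ring

theorem chi_freeCoords_of_g_eq_zero (hk : ∀ i, 0 < k i) {x : Fin 9 → ℝ} (hx : x 5 ≠ 0)
    (hg : g k x = 0) : chi k (freeCoords x) = x := by
  have e2 : k 0 * x 0 * x 1 - (k 1 + k 2) * x 2 = 0 := congrFun hg 2
  have e3 : k 2 * x 2 - k 3 * x 3 = 0 := congrFun hg 3
  have e4 : k 3 * x 3 - k 4 * x 4 * x 5 + k 5 * x 6 = 0 := congrFun hg 4
  have e6 : k 4 * x 4 * x 5 - (k 5 + k 6) * x 6 = 0 := congrFun hg 6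
  have e7 : k 6 * x 6 - k 7 * x 5 * x 7 + k 8 * x 8 = 0 := congrFun hg 7
  have e8 : k 7 * x 5 * x 7 - (k 8 + k 9) * x 8 = 0 := congrFun hg 8
  have h2 : (k 1 + k 2) * x 2 = k 0 * x 0 * x 1 := by linear_combination -e2
  have h3 : k 3 * x 3 = k 2 * x 2 := by linear_combination -e3
  have h6 : k 6 * x 6 = k 2 * x 2 := by linear_combination -(e3 + e4 + e6)
  have h8 : k 9 * x 8 = k 2 * x 2 := by linear_combination -(e3 + e4 + e6 + e7 + e8)
  have h4 : k 4 * x 4 * x 5 = (k 5 + k 6) * x 6 := by linear_combination e6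
  have h7 : k 7 * x 5 * x 7 = (k 8 + k 9) * x 8 := by linear_combination e8
  have := (hk 3).ne'; have := (hk 4).ne'; have := (hk 6).ne'; have := (hk 7).ne'
  have := (hk 9).ne'
  have : k 1 + k 2 ≠ 0 := (add_pos (hk 1) (hk 2)).ne'
  ext i
  fin_cases i <;>
    simp only [chi, freeCoords, Fin.isValue, Fin.zero_eta, Fin.mk_one, Fin.reduceFinMk,
      cons_val_zero, cons_val_one, cons_val] <;>
    field_simp
  -- the coordinates `2, 3, 4, 6, 7, 8` remain
  · linear_combination -h2
  · linear_combination -k 2 * h2 - (k 1 + k 2) * h3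
  · linear_combination (k 5 + k 6) * (-k 2 * h2 - (k 1 + k 2) * h6) - (k 1 + k 2) * k 6 * h4
  · linear_combination -k 2 * h2 - (k 1 + k 2) * h6
  · linear_combination (k 8 + k 9) * (-k 2 * h2 - (k 1 + k 2) * h8) - (k 1 + k 2) * k 9 * h7
  · linear_combination -k 2 * h2 - (k 1 + k 2) * h8

end

/-- the positive steady states are exactly the image of the
parametrization `χ_k` on the positive orthant, and `χ_k` is injective there. -/
theorem steady_state_parametrization (k : Fin 10 → ℝ) (hk : ∀ i, 0 < k i) :
    {x : Fin 9 → ℝ | (∀ i, 0 < x i) ∧ g k x = 0} =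
        chi k '' {y : Fin 3 → ℝ | ∀ i, 0 < y i} ∧
      Set.InjOn (chi k) {y : Fin 3 → ℝ | ∀ i, 0 < y i} := by
  refine ⟨Set.ext fun x => ⟨?_, ?_⟩, (chi_injective k).injOn⟩
  · rintro ⟨hx, hg⟩
    refine ⟨freeCoords x, fun i => ?_, chi_freeCoords_of_g_eq_zero hk (hx 5).ne' hg⟩
    fin_cases i <;> apply hx
  · rintro ⟨y, hy, rfl⟩
    exact ⟨chi_pos hk hy, g_chi_eq_zero hk (hy 2).ne'⟩
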